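/- arXiv:1006.0070 — 2 statements merged into one kernel-verified Lean document; each statement's English description precedes it below -/
import Mathlib

section
/- Let μ ≤ 0, f, f̄ : ℝ⁶ → ℝ≥0 be equimeasurable integrable functions, and let e : ℝ⁶ → ℝ be measurable such that f̄ = G ∘ e for some nonincreasing function G, and such that e·f and e·f̄ are integrable. Then ∫ e(x,v)(f̄(x,v) − f(x,v)) dxdv ≤ 0. -/
/-!
By Fubini, `∫ e h = ∫_{λ > 0} ∫_{h > λ} e` for `h ≥ 0` (a layer-cake formula weighted by `e`), so
it suffices to compare, for each `λ > 0`, the integrals of `e` over `A = {f̄ > λ}` and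
`B = {f > λ}`. These sets have the same finite measure, and since `f̄ = G ∘ e` with `G` antitone,
`e` is smaller on `A \ B` than on `B \ A`. With a threshold `t` between the two ranges,
`∫_A e - ∫_B e ≤ t μ(A \ B) - t μ(B \ A) = 0`: this is the bathtub principle.
-/

open Set MeasureTheory

namespace MeasureTheory

open scoped ENNReal

variable {α : Type*} [MeasurableSpace α] {μ : Measure α} {e : α → ℝ} {A B : Set α}

theorem setIntegral_le_setIntegral_of_le_of_le (hA : MeasurableSet A) (hB : MeasurableSet B)
    (hμ : μ A = μ B) (hfin : μ B ≠ ∞) (heA : IntegrableOn e A μ) (heB : IntegrableOn e B μ)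
    (t : ℝ) (hle : ∀ x ∈ A \ B, e x ≤ t) (hge : ∀ x ∈ B \ A, t ≤ e x) :
    ∫ x in A, e x ∂μ ≤ ∫ x in B, e x ∂μ := by
  have htA : Integrable (A.indicator fun _ => t) μ :=
    (integrable_indicator_iff hA).2 (integrableOn_const (hμ ▸ hfin))
  have htB : Integrable (B.indicator fun _ => t) μ :=
    (integrable_indicator_iff hB).2 (integrableOn_const hfin)
  -- `1_A e + 1_B t ≤ 1_B e + 1_A t`, and the constant terms have equal integrals as `μ A = μ B`.
  have hpt : ∀ x, A.indicator e x + B.indicator (fun _ => t) x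
      ≤ B.indicator e x + A.indicator (fun _ => t) x := by
    intro x
    by_cases hxA : x ∈ A <;> by_cases hxB : x ∈ B
    · simp [hxA, hxB]
    · simpa [hxA, hxB] using hle x ⟨hxA, hxB⟩
    · simpa [hxA, hxB] using hge x ⟨hxB, hxA⟩
    · simp [hxA, hxB]
  have hint := integral_mono (((integrable_indicator_iff hA).2 heA).add htB)
    (((integrable_indicator_iff hB).2 heB).add htA) hpt
  rw [integral_add' ((integrable_indicator_iff hA).2 heA) htB,
    integral_add' ((integrable_indicator_iff hB).2 heB) htA] at hint
  simp only [integral_indicator hA, integral_indicator hB, setIntegral_const, measureReal_def,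
    hμ] at hint
  linarith

theorem setIntegral_le_setIntegral_of_measure_eq (hA : MeasurableSet A) (hB : MeasurableSet B)
    (hμ : μ A = μ B) (hfin : μ B ≠ ∞) (heA : IntegrableOn e A μ) (heB : IntegrableOn e B μ)
    (hsep : ∀ x ∈ A \ B, ∀ y ∈ B \ A, e x ≤ e y) :
    ∫ x in A, e x ∂μ ≤ ∫ x in B, e x ∂μ := by
  by_cases hne : (A \ B).Nonempty ∧ (B \ A).Nonempty
  · obtain ⟨⟨x₀, hx₀⟩, ⟨y₀, hy₀⟩⟩ := hne
    have hbdd : BddAbove (e '' (A \ B)) :=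
      ⟨e y₀, forall_mem_image.2 fun x hx => hsep x hx y₀ hy₀⟩
    exact setIntegral_le_setIntegral_of_le_of_le hA hB hμ hfin heA heB (sSup (e '' (A \ B)))
      (fun x hx => le_csSup hbdd (mem_image_of_mem e hx))
      (fun y hy => csSup_le ⟨e x₀, mem_image_of_mem e hx₀⟩
        (forall_mem_image.2 fun x hx => hsep x hx y hy))
  · have hdiff : μ (A \ B) = μ (B \ A) :=
      measure_sdiff_symm hA.nullMeasurableSet hB.nullMeasurableSet hμ
        (ne_top_of_le_ne_top hfin (measure_mono inter_subset_right))
    have hnull : μ (A \ B) = 0 ∧ μ (B \ A) = 0 := by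
      rcases not_and_or.1 hne with h | h <;> rw [not_nonempty_iff_eq_empty] at h
      · exact ⟨by simp [h], by simp [← hdiff, h]⟩
      · exact ⟨by simp [hdiff, h], by simp [h]⟩
    exact (setIntegral_congr_set (ae_eq_set.2 hnull)).le

theorem integrableOn_setOf_lt_of_integrable_mul {h : α → ℝ} (he : Measurable e)
    (hh : Measurable h) (heh : Integrable (fun z => e z * h z) μ) {s : ℝ} (hs : 0 < s) :
    IntegrableOn e {z | s < h z} μ := by
  refine Integrable.mono' ((heh.norm.const_mul s⁻¹).restrict) he.aestronglyMeasurable.restrict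
    ((ae_restrict_iff' (measurableSet_lt measurable_const hh)).2 (ae_of_all _ fun z hz => ?_))
  have hz : s < h z := hz
  rw [norm_mul, Real.norm_of_nonneg (hs.trans hz).le, le_inv_mul_iff₀ hs, mul_comm s]
  exact mul_le_mul_of_nonneg_left hz.le (norm_nonneg (e z))

theorem integral_Ioi_ite_lt {a : ℝ} (ha : 0 ≤ a) (c : ℝ) :
    ∫ s in Ioi (0 : ℝ), (if s < a then c else 0) = a * c := by
  have hind : (fun s : ℝ => if s < a then c else 0) = (Iio a).indicator fun _ => c := by
    ext s; simp [indicator_apply]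
  rw [hind, integral_indicator measurableSet_Iio, Measure.restrict_restrict measurableSet_Iio,
    setIntegral_const, measureReal_def, Iio_inter_Ioi, Real.volume_Ioo, sub_zero,
    ENNReal.toReal_ofReal ha, smul_eq_mul]

theorem integrableOn_Ioi_ite_lt (a c : ℝ) :
    IntegrableOn (fun s : ℝ => if s < a then c else 0) (Ioi 0) := by
  have hind : (fun s : ℝ => if s < a then c else 0) = (Iio a).indicator fun _ => c := by
    ext s; simp [indicator_apply]
  rw [hind, IntegrableOn, integrable_indicator_iff measurableSet_Iio]
  exact integrableOn_const (by simp [Measure.restrict_apply measurableSet_Iio, Iio_inter_Ioi])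

theorem integrable_prod_ite_lt {h : α → ℝ} (he : Measurable e) (hh : Measurable h) (hnn : 0 ≤ h)
    (heh : Integrable (fun z => e z * h z) μ) :
    Integrable (fun p : α × ℝ => if p.2 < h p.1 then e p.1 else 0)
      (μ.prod (volume.restrict (Ioi 0))) := by
  refine (integrable_prod_iff ?_).2 ⟨ae_of_all _ fun z => integrableOn_Ioi_ite_lt (h z) (e z), ?_⟩
  · exact (Measurable.ite (measurableSet_lt measurable_snd (hh.comp measurable_fst))
      (he.comp measurable_fst) measurable_const).aestronglyMeasurable
  · refine heh.norm.congr (ae_of_all _ fun z => ?_)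
    simp only [apply_ite norm, norm_zero, integral_Ioi_ite_lt (hnn z), norm_mul,
      Real.norm_of_nonneg (hnn z), mul_comm]

theorem integral_ite_lt_eq_setIntegral {h : α → ℝ} (hh : Measurable h) (s : ℝ) :
    ∫ z, (if s < h z then e z else 0) ∂μ = ∫ z in {z | s < h z}, e z ∂μ := by
  rw [← integral_indicator (measurableSet_lt measurable_const hh)]
  simp [indicator_apply]

variable [SFinite μ] {h : α → ℝ}

theorem integrableOn_setIntegral_setOf_lt (he : Measurable e) (hh : Measurable h) (hnn : 0 ≤ h)
    (heh : Integrable (fun z => e z * h z) μ) :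
    IntegrableOn (fun s => ∫ z in {z | s < h z}, e z ∂μ) (Ioi 0) := by
  simpa only [IntegrableOn, integral_ite_lt_eq_setIntegral hh] using
    (integrable_prod_ite_lt he hh hnn heh).integral_prod_right

theorem integral_mul_eq_integral_setIntegral_setOf_lt (he : Measurable e) (hh : Measurable h)
    (hnn : 0 ≤ h) (heh : Integrable (fun z => e z * h z) μ) :
    ∫ z, e z * h z ∂μ = ∫ s in Ioi (0 : ℝ), ∫ z in {z | s < h z}, e z ∂μ := by
  have hswap := integral_integral_swap (f := fun z s => if s < h z then e z else 0)
    (integrable_prod_ite_lt he hh hnn heh)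
  simp only [integral_Ioi_ite_lt (hnn _)] at hswap
  simp only [mul_comm (e _), hswap, integral_ite_lt_eq_setIntegral hh]

theorem integral_mul_le_integral_mul_of_setIntegral_le {h₁ h₂ : α → ℝ} (he : Measurable e)
    (hh₁ : Measurable h₁) (hh₂ : Measurable h₂) (hnn₁ : 0 ≤ h₁) (hnn₂ : 0 ≤ h₂)
    (heh₁ : Integrable (fun z => e z * h₁ z) μ) (heh₂ : Integrable (fun z => e z * h₂ z) μ)
    (hle : ∀ s, 0 < s → ∫ z in {z | s < h₁ z}, e z ∂μ ≤ ∫ z in {z | s < h₂ z}, e z ∂μ) :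
    ∫ z, e z * h₁ z ∂μ ≤ ∫ z, e z * h₂ z ∂μ := by
  rw [integral_mul_eq_integral_setIntegral_setOf_lt he hh₁ hnn₁ heh₁,
    integral_mul_eq_integral_setIntegral_setOf_lt he hh₂ hnn₂ heh₂]
  exact setIntegral_mono_on (integrableOn_setIntegral_setOf_lt he hh₁ hnn₁ heh₁)
    (integrableOn_setIntegral_setOf_lt he hh₂ hnn₂ heh₂) measurableSet_Ioi hle

end MeasureTheory

theorem bathtub_inequality_general
    (f fbar : EuclideanSpace ℝ (Fin 3) × EuclideanSpace ℝ (Fin 3) → ℝ)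
    (e : EuclideanSpace ℝ (Fin 3) × EuclideanSpace ℝ (Fin 3) → ℝ)
    (G : ℝ → ℝ)
    (hemeas : Measurable e) (hfmeas : Measurable f)
    (hfnn : ∀ z, 0 ≤ f z) (hfbarnn : ∀ z, 0 ≤ fbar z)
    (hfint : Integrable f)
    (hG : Antitone G) (hbar : ∀ z, fbar z = G (e z))
    (hequi : ∀ lam : ℝ, 0 < lam →
      volume {z | lam < f z} = volume {z | lam < fbar z})
    (hef : Integrable (fun z => e z * f z))
    (hefbar : Integrable (fun z => e z * fbar z)) :
    (∫ z, e z * (fbar z - f z)) ≤ 0 := by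
  have hfbarmeas : Measurable fbar := by
    rw [show fbar = G ∘ e from funext hbar]
    exact hG.measurable.comp hemeas
  simp_rw [mul_sub]
  rw [integral_sub hefbar hef, sub_nonpos]
  refine integral_mul_le_integral_mul_of_setIntegral_le hemeas hfbarmeas hfmeas hfbarnn hfnn
    hefbar hef fun lam hlam => setIntegral_le_setIntegral_of_measure_eq
      (measurableSet_lt measurable_const hfbarmeas) (measurableSet_lt measurable_const hfmeas)
      (hequi lam hlam).symm (hfint.measure_gt_lt_top hlam).ne
      (integrableOn_setOf_lt_of_integrable_mul hemeas hfbarmeas hefbar hlam)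
      (integrableOn_setOf_lt_of_integrable_mul hemeas hfmeas hef hlam) ?_
  -- `{lam < fbar}` is a sublevel set of `e` because `G` is antitone.
  rintro x ⟨hx, -⟩ y ⟨-, hy⟩
  exact le_of_not_gt fun hlt =>
    hy (show lam < fbar y from hx.trans_le (by rw [hbar x, hbar y]; exact hG hlt.le))

/-- Bathtub principle inequality: if `f̄ = G ∘ e` is a nonincreasing function of the
microscopic energy `e`, equimeasurable with `f`, then `∫ e (f̄ - f) ≤ 0`. -/
theorem bathtub_inequality
    (f fbar : EuclideanSpace ℝ (Fin 3) × EuclideanSpace ℝ (Fin 3) → ℝ)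
    (e : EuclideanSpace ℝ (Fin 3) × EuclideanSpace ℝ (Fin 3) → ℝ)
    (G : ℝ → ℝ)
    (hemeas : Measurable e) (hfmeas : Measurable f)
    (hfnn : ∀ z, 0 ≤ f z) (hfbarnn : ∀ z, 0 ≤ fbar z)
    (hfint : Integrable f) (hfbarint : Integrable fbar)
    (hG : Antitone G) (hbar : ∀ z, fbar z = G (e z))
    (hequi : ∀ lam : ℝ, 0 < lam →
      volume {z | lam < f z} = volume {z | lam < fbar z})
    (hef : Integrable (fun z => e z * f z))
    (hefbar : Integrable (fun z => e z * fbar z)) :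
    (∫ z, e z * (fbar z - f z)) ≤ 0 :=
  bathtub_inequality_general f fbar e G hemeas hfmeas hfnn hfbarnn hfint hG hbar hequi hef hefbar
end

section
/- Let φ : (0,∞) → ℝ be defined via a radial density ρ ∈ L¹ ∩ L^{3/2}((0,∞), s²ds) by φ(r) = −(1/π) ∫₀^∞ ρ(s) g_r(s) s² ds, where g_r(s) = (1/(rs)) log|(r+s)/(r−s)|. Then for each 0 < α < 1 there is a constant C_α (independent of ρ) such that |φ(r)| ≤ C_α r^{−1−α} (‖ρ‖_{L¹(s²ds)} + ‖ρ‖_{L^{3/2}(s²ds)}) for all r > 0. -/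
/-!
Write `g_r(s) = 1/(rs) log |(r+s)/(r-s)|` and `k = 3 / (1 - α)`. Pointwise
`ρ g_r s² = (ρ s²) ^ α · (ρ^{3/2} s²) ^ (2(1-α)/3) · (g_r^k s²) ^ ((1-α)/3)`, and the three
exponents sum to `1`, so Hölder's inequality bounds `∫ ρ g_r s²` by
`‖ρ‖₁ ^ α ‖ρ‖_{3/2} ^ (1-α) ‖g_r‖_k` (norms in `L^p(s² ds)`). The scaling `g_r(s) = r⁻² g₁(s/r)`
gives `‖g_r‖_k = r ^ (-1-α) ‖g₁‖_k`, and `‖g₁‖_k` is finite because `g₁` is bounded near `0`, has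
only a logarithmic singularity at `1` and is at most `4/u²` for `u ≥ 2`.
Finally `a ^ α b ^ (1-α) ≤ a + b`.
-/

open Real Set MeasureTheory
open scoped ENNReal

theorem ENNReal.lintegral_mul_mul_rpow_le {X : Type*} [MeasurableSpace X] {μ : Measure X}
    {F G H : X → ℝ≥0∞} (hF : AEMeasurable F μ) (hG : AEMeasurable G μ) (hH : AEMeasurable H μ)
    {a b c : ℝ} (ha : 0 ≤ a) (hb : 0 ≤ b) (hc : 0 ≤ c) (habc : a + b + c = 1) :
    ∫⁻ x, F x ^ a * G x ^ b * H x ^ c ∂μ ≤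
      (∫⁻ x, F x ∂μ) ^ a * (∫⁻ x, G x ∂μ) ^ b * (∫⁻ x, H x ∂μ) ^ c := by
  have := ENNReal.lintegral_prod_norm_pow_le (μ := μ) Finset.univ (f := ![F, G, H])
    (p := ![a, b, c]) (fun i _ => by fin_cases i <;> assumption)
    (by simpa [Fin.sum_univ_three] using habc) (fun i _ => by fin_cases i <;> assumption)
  simpa [Fin.prod_univ_three, mul_assoc] using this

theorem integral_mul_mul_rpow_le {X : Type*} [MeasurableSpace X] {μ : Measure X}
    {F G H : X → ℝ} (hF₀ : ∀ᵐ x ∂μ, 0 ≤ F x) (hG₀ : ∀ᵐ x ∂μ, 0 ≤ G x) (hH₀ : ∀ᵐ x ∂μ, 0 ≤ H x)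
    (hF : Integrable F μ) (hG : Integrable G μ) (hH : Integrable H μ)
    {a b c : ℝ} (ha : 0 ≤ a) (hb : 0 ≤ b) (hc : 0 ≤ c) (habc : a + b + c = 1) :
    ∫ x, F x ^ a * G x ^ b * H x ^ c ∂μ ≤
      (∫ x, F x ∂μ) ^ a * (∫ x, G x ∂μ) ^ b * (∫ x, H x ∂μ) ^ c := by
  have hIF := integral_nonneg_of_ae hF₀
  have hIG := integral_nonneg_of_ae hG₀
  have hIH := integral_nonneg_of_ae hH₀
  rw [integral_eq_lintegral_of_nonneg_ae (f := fun x => F x ^ a * G x ^ b * H x ^ c)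
    (by filter_upwards [hF₀, hG₀, hH₀] with x hFx hGx hHx; positivity)
    (((hF.aemeasurable.pow_const a).mul (hG.aemeasurable.pow_const b)).mul
      (hH.aemeasurable.pow_const c) :).aestronglyMeasurable]
  refine ENNReal.toReal_le_of_le_ofReal (by positivity) ?_
  calc ∫⁻ x, ENNReal.ofReal (F x ^ a * G x ^ b * H x ^ c) ∂μ
      = ∫⁻ x, ENNReal.ofReal (F x) ^ a * ENNReal.ofReal (G x) ^ b *
          ENNReal.ofReal (H x) ^ c ∂μ := by
        refine lintegral_congr_ae ?_
        filter_upwards [hF₀, hG₀, hH₀] with x hFx hGx hHx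
        rw [ENNReal.ofReal_mul (by positivity), ENNReal.ofReal_mul (by positivity),
          ENNReal.ofReal_rpow_of_nonneg hFx ha, ENNReal.ofReal_rpow_of_nonneg hGx hb,
          ENNReal.ofReal_rpow_of_nonneg hHx hc]
    _ ≤ _ := ENNReal.lintegral_mul_mul_rpow_le hF.aemeasurable.ennreal_ofReal
        hG.aemeasurable.ennreal_ofReal hH.aemeasurable.ennreal_ofReal ha hb hc habc
    _ = _ := by
        rw [← ofReal_integral_eq_lintegral_ofReal hF hF₀,
          ← ofReal_integral_eq_lintegral_ofReal hG hG₀,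
          ← ofReal_integral_eq_lintegral_ofReal hH hH₀,
          ENNReal.ofReal_mul (by positivity), ENNReal.ofReal_mul (by positivity),
          ENNReal.ofReal_rpow_of_nonneg hIF ha, ENNReal.ofReal_rpow_of_nonneg hIG hb,
          ENNReal.ofReal_rpow_of_nonneg hIH hc]

theorem mul_mul_eq_interpolation {x y w θ p k : ℝ} (hx : 0 ≤ x) (hy : 0 ≤ y) (hw : 0 ≤ w)
    (hθ₀ : 0 ≤ θ) (hθ₁ : θ ≤ 1) (hp : 0 < p) (hk : 0 < k) (h : θ + (1 - θ) / p + 1 / k = 1) :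
    x * y * w = (x * w) ^ θ * (x ^ p * w) ^ ((1 - θ) / p) * (y ^ k * w) ^ (1 / k) := by
  have hb : 0 ≤ (1 - θ) / p := div_nonneg (sub_nonneg.2 hθ₁) hp.le
  rw [mul_rpow hx hw, mul_rpow (rpow_nonneg hx p) hw, mul_rpow (rpow_nonneg hy k) hw,
    ← rpow_mul hx, ← rpow_mul hy, mul_div_cancel₀ _ hp.ne', mul_one_div_cancel hk.ne', rpow_one]
  have hx1 : x ^ θ * x ^ (1 - θ) = x := by
    rw [← rpow_add_of_nonneg hx hθ₀ (sub_nonneg.2 hθ₁), add_sub_cancel, rpow_one]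
  have hw1 : w ^ θ * w ^ ((1 - θ) / p) * w ^ (1 / k) = w := by
    rw [← rpow_add_of_nonneg hw hθ₀ hb, ← rpow_add_of_nonneg hw (by positivity) (by positivity), h,
      rpow_one]
  calc x * y * w = (x ^ θ * x ^ (1 - θ)) * y * (w ^ θ * w ^ ((1 - θ) / p) * w ^ (1 / k)) := by
        rw [hx1, hw1]
    _ = _ := by ring

theorem integral_mul_mul_le_interpolation {X : Type*} [MeasurableSpace X] {μ : Measure X}
    {f g w : X → ℝ} (hf₀ : ∀ᵐ x ∂μ, 0 ≤ f x) (hg₀ : ∀ᵐ x ∂μ, 0 ≤ g x) (hw₀ : ∀ᵐ x ∂μ, 0 ≤ w x)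
    {θ p k : ℝ} (hθ₀ : 0 ≤ θ) (hθ₁ : θ ≤ 1) (hp : 0 < p) (hk : 0 < k)
    (h : θ + (1 - θ) / p + 1 / k = 1)
    (hf : Integrable (fun x => f x * w x) μ) (hfp : Integrable (fun x => f x ^ p * w x) μ)
    (hg : Integrable (fun x => g x ^ k * w x) μ) :
    ∫ x, f x * g x * w x ∂μ ≤
      (∫ x, f x * w x ∂μ) ^ θ * (∫ x, f x ^ p * w x ∂μ) ^ ((1 - θ) / p) *
        (∫ x, g x ^ k * w x ∂μ) ^ (1 / k) := by
  rw [integral_congr_ae (by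
    filter_upwards [hf₀, hg₀, hw₀] with x hfx hgx hwx
    exact mul_mul_eq_interpolation hfx hgx hwx hθ₀ hθ₁ hp hk h)]
  refine integral_mul_mul_rpow_le ?_ ?_ ?_ hf hfp hg hθ₀
    (div_nonneg (sub_nonneg.2 hθ₁) hp.le) (by positivity) h
  all_goals filter_upwards [hf₀, hg₀, hw₀] with x hfx hgx hwx; positivity

theorem rpow_mul_rpow_one_sub_le_add {x y θ : ℝ} (hx : 0 ≤ x) (hy : 0 ≤ y) (hθ₀ : 0 ≤ θ)
    (hθ₁ : θ ≤ 1) : x ^ θ * y ^ (1 - θ) ≤ x + y := by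
  have := geom_mean_le_arith_mean2_weighted hθ₀ (sub_nonneg.2 hθ₁) hx hy (add_sub_cancel θ 1)
  nlinarith

theorem intervalIntegrable_abs_sub_rpow {r : ℝ} (hr : -1 < r) (c a b : ℝ) :
    IntervalIntegrable (fun x => |x - c| ^ r) volume a b := by
  have hloc : LocallyIntegrable (fun x : ℝ => |x| ^ r) :=
    locallyIntegrable_of_norm_le_rpow (C := 1) (α := -r) (by simp)
      (by simp only [Module.finrank_self, Nat.cast_one]; linarith)
      (ae_of_all _ fun x => by simp [abs_of_nonneg (rpow_nonneg (abs_nonneg x) r)])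
      ((measurable_abs.pow_const r).aestronglyMeasurable)
  simpa using ((hloc.integrableOn_isCompact isCompact_uIcc).intervalIntegrable
    (a := a - c) (b := b - c)).comp_sub_right c

noncomputable def manevKernel (r s : ℝ) : ℝ := 1 / (r * s) * log |(r + s) / (r - s)|

theorem measurable_manevKernel (r : ℝ) : Measurable (manevKernel r) := by
  unfold manevKernel; fun_prop

theorem manevKernel_nonneg {r s : ℝ} (hr : 0 ≤ r) (hs : 0 ≤ s) : 0 ≤ manevKernel r s := by
  refine mul_nonneg (by positivity) ?_
  rcases eq_or_ne r s with rfl | hrs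
  · simp
  rw [abs_div, abs_of_nonneg (add_nonneg hr hs)]
  refine log_nonneg ((one_le_div (abs_pos.2 (sub_ne_zero.2 hrs))).2 ?_)
  exact abs_sub_le_iff.2 ⟨by linarith, by linarith⟩

theorem manevKernel_eq_inv_sq_mul {r : ℝ} (hr : r ≠ 0) (s : ℝ) :
    manevKernel r s = (r ^ 2)⁻¹ * manevKernel 1 (r⁻¹ * s) := by
  have hquot : (1 + r⁻¹ * s) / (1 - r⁻¹ * s) = (r + s) / (r - s) := by
    rw [← mul_div_mul_left _ _ hr, mul_add, mul_sub, mul_one, mul_inv_cancel_left₀ hr]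
  unfold manevKernel
  rw [hquot, ← mul_assoc]
  congr 1
  rcases eq_or_ne s 0 with rfl | hs
  · simp
  · field_simp

theorem manevKernel_rpow_mul_sq {r s : ℝ} (hr : 0 < r) (hs : 0 ≤ s) (k : ℝ) :
    manevKernel r s ^ k * s ^ 2 =
      r ^ (2 - 2 * k) * (manevKernel 1 (r⁻¹ * s) ^ k * (r⁻¹ * s) ^ 2) := by
  have hs' : 0 ≤ r⁻¹ * s := by positivity
  rw [manevKernel_eq_inv_sq_mul hr.ne',
    mul_rpow (by positivity) (manevKernel_nonneg zero_le_one hs'),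
    inv_rpow (sq_nonneg r), ← rpow_natCast, ← rpow_mul hr.le, rpow_sub hr, rpow_two]
  field_simp
  push_cast
  rw [mul_comm k]
  ring

theorem manevKernel_one_le_four {u : ℝ} (hu₀ : 0 < u) (hu : u ≤ 1 / 2) : manevKernel 1 u ≤ 4 := by
  have hpos : 0 < (1 + u) / (1 - u) := div_pos (by linarith) (by linarith)
  have hlog : log |(1 + u) / (1 - u)| ≤ 4 * u := by
    rw [abs_of_pos hpos]
    calc log ((1 + u) / (1 - u)) ≤ (1 + u) / (1 - u) - 1 := log_le_sub_one_of_pos hpos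
      _ = 2 * u / (1 - u) := by rw [div_sub_one (by linarith)]; ring
      _ ≤ 4 * u := by rw [div_le_iff₀ (by linarith)]; nlinarith
  calc manevKernel 1 u ≤ 1 / (1 * u) * (4 * u) :=
        mul_le_mul_of_nonneg_left hlog (by positivity)
    _ = 4 := by field_simp

theorem manevKernel_one_le_of_two_le {u : ℝ} (hu : 2 ≤ u) : manevKernel 1 u ≤ 4 / u ^ 2 := by
  have hpos : 0 < (u + 1) / (u - 1) := div_pos (by linarith) (by linarith)
  have hlog : log |(1 + u) / (1 - u)| ≤ 4 / u := by
    rw [abs_div, abs_of_pos (by linarith : (0:ℝ) < 1 + u), abs_of_neg (by linarith : 1 - u < 0),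
      neg_sub, add_comm]
    calc log ((u + 1) / (u - 1)) ≤ (u + 1) / (u - 1) - 1 := log_le_sub_one_of_pos hpos
      _ = 2 / (u - 1) := by rw [div_sub_one (by linarith)]; ring
      _ ≤ 4 / u := by rw [div_le_div_iff₀ (by linarith) (by linarith)]; linarith
  calc manevKernel 1 u ≤ 1 / (1 * u) * (4 / u) :=
        mul_le_mul_of_nonneg_left hlog (by positivity)
    _ = 4 / u ^ 2 := by field_simp

theorem manevKernel_one_rpow_le {k u : ℝ} (hk : 0 < k) (hu₀ : 1 / 2 ≤ u) (hu₁ : u ≤ 2) :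
    manevKernel 1 u ^ k ≤ (4 * k) ^ k * √3 * |u - 1| ^ (-(1 / 2) : ℝ) := by
  rcases eq_or_ne u 1 with rfl | hu
  · simp [manevKernel, zero_rpow hk.ne']
  set t := |u - 1|
  have ht : 0 < t := abs_pos.2 (sub_ne_zero.2 hu)
  obtain ⟨ε, hεk, hε⟩ : ∃ ε, ε * k = 1 / 2 ∧ 0 < ε := ⟨1 / (2 * k), by field_simp, by positivity⟩
  have hg : manevKernel 1 u ≤ 4 * k * (3 / t) ^ ε := by
    have hquot : |(1 + u) / (1 - u)| = (1 + u) / t := by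
      rw [abs_div, abs_of_pos (by linarith), abs_sub_comm]
    calc manevKernel 1 u ≤ 2 * log (3 / t) := by
          have ht1 : t ≤ 1 := abs_sub_le_iff.2 ⟨by linarith, by linarith⟩
          unfold manevKernel
          rw [hquot]
          refine mul_le_mul ?_ ?_ ?_ zero_le_two
          · rw [one_mul, div_le_iff₀ (by linarith)]; linarith
          · exact log_le_log (by positivity) (by gcongr; linarith)
          · exact log_nonneg ((one_le_div ht).2 (by linarith))
      _ ≤ 2 * ((3 / t) ^ ε / ε) := by gcongr; exact log_le_rpow_div (by positivity) hε
      _ = 4 * k * (3 / t) ^ ε := by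
          rw [show k = 1 / 2 / ε by rw [← hεk]; field_simp]; field_simp; ring
  calc manevKernel 1 u ^ k ≤ (4 * k * (3 / t) ^ ε) ^ k :=
        rpow_le_rpow (manevKernel_nonneg zero_le_one (by linarith)) hg hk.le
    _ = (4 * k) ^ k * √3 * t ^ (-(1 / 2) : ℝ) := by
        rw [mul_rpow (by positivity) (by positivity), ← rpow_mul (by positivity),
          hεk, div_rpow (by norm_num) ht.le, sqrt_eq_rpow,
          rpow_neg ht.le]
        ring

theorem integrableOn_manevKernel_one_rpow_mul_sq {k : ℝ} (hk : 3 / 2 < k) :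
    IntegrableOn (fun u => manevKernel 1 u ^ k * u ^ 2) (Ioi 0) := by
  have hk₀ : 0 < k := by linarith
  have hmeas : AEStronglyMeasurable (fun u => manevKernel 1 u ^ k * u ^ 2) :=
    (((measurable_manevKernel 1).pow_const k).mul (measurable_id.pow_const 2)).aestronglyMeasurable
  have hnorm {u : ℝ} (hu : 0 ≤ u) : ‖manevKernel 1 u ^ k * u ^ 2‖ = manevKernel 1 u ^ k * u ^ 2 :=
    norm_of_nonneg (by have := manevKernel_nonneg zero_le_one hu; positivity)
  have hsplit : Ioi (0 : ℝ) = (Ioc 0 (1 / 2) ∪ Ioc (1 / 2) 2) ∪ Ioi 2 := by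
    rw [Ioc_union_Ioc_eq_Ioc (by norm_num) (by norm_num), Ioc_union_Ioi_eq_Ioi (by norm_num)]
  rw [hsplit]
  refine (IntegrableOn.union (IntegrableOn.union ?_ ?_) ?_)
  · refine (integrableOn_const (C := (4 : ℝ) ^ k) (by simp)).mono' hmeas.restrict ?_
    filter_upwards [ae_restrict_mem measurableSet_Ioc] with u ⟨hu₀, hu⟩
    rw [hnorm hu₀.le]
    calc manevKernel 1 u ^ k * u ^ 2 ≤ 4 ^ k * 1 := by
          gcongr
          · exact manevKernel_nonneg zero_le_one hu₀.le
          · exact manevKernel_one_le_four hu₀ hu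
          · nlinarith
      _ = 4 ^ k := mul_one _
  · have hsing : IntegrableOn (fun u => 4 * ((4 * k) ^ k * √3 * |u - 1| ^ (-(1 / 2) : ℝ)))
        (Ioc (1 / 2) 2) := by
      refine Integrable.const_mul (Integrable.const_mul ?_ _) _
      exact (intervalIntegrable_iff_integrableOn_Ioc_of_le (by norm_num)).1
        (intervalIntegrable_abs_sub_rpow (by norm_num) 1 _ _)
    refine hsing.mono' hmeas.restrict ?_
    filter_upwards [ae_restrict_mem measurableSet_Ioc] with u ⟨hu₀, hu⟩
    rw [hnorm (by linarith), mul_comm 4]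
    gcongr
    · exact manevKernel_one_rpow_le hk₀ hu₀.le hu
    · nlinarith
  · have hdecay : IntegrableOn (fun u : ℝ => 4 ^ k * u ^ (2 - 2 * k)) (Ioi 2) :=
      (integrableOn_Ioi_rpow_of_lt (by linarith) two_pos).const_mul _
    refine hdecay.mono' hmeas.restrict ?_
    filter_upwards [ae_restrict_mem measurableSet_Ioi] with u (hu : 2 < u)
    have hu₀ : 0 < u := by linarith
    rw [hnorm hu₀.le]
    calc manevKernel 1 u ^ k * u ^ 2 ≤ (4 / u ^ 2) ^ k * u ^ 2 := by
          gcongr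
          · exact manevKernel_nonneg zero_le_one hu₀.le
          · exact manevKernel_one_le_of_two_le hu.le
      _ = 4 ^ k * u ^ (2 - 2 * k) := by
          rw [div_rpow (by norm_num) (by positivity), ← rpow_natCast, ← rpow_mul hu₀.le,
            rpow_sub hu₀]
          push_cast
          ring

theorem integrableOn_manevKernel_rpow_mul_sq {r k : ℝ} (hr : 0 < r) (hk : 3 / 2 < k) :
    IntegrableOn (fun s => manevKernel r s ^ k * s ^ 2) (Ioi 0) := by
  have h := ((integrableOn_Ioi_comp_mul_left_iff (fun u => manevKernel 1 u ^ k * u ^ 2) 0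
    (inv_pos.2 hr)).2 (by simpa using integrableOn_manevKernel_one_rpow_mul_sq hk)).const_mul
    (r ^ (2 - 2 * k))
  refine IntegrableOn.congr_fun h (fun s hs => ?_) measurableSet_Ioi
  exact (manevKernel_rpow_mul_sq hr (le_of_lt hs) k).symm

theorem setIntegral_manevKernel_rpow_mul_sq {r : ℝ} (hr : 0 < r) (k : ℝ) :
    ∫ s in Ioi 0, manevKernel r s ^ k * s ^ 2 =
      r ^ (3 - 2 * k) * ∫ u in Ioi 0, manevKernel 1 u ^ k * u ^ 2 := by
  rw [setIntegral_congr_fun measurableSet_Ioi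
      fun s hs => manevKernel_rpow_mul_sq hr (le_of_lt hs) k,
    integral_const_mul, integral_comp_mul_left_Ioi (fun u => manevKernel 1 u ^ k * u ^ 2) 0
      (inv_pos.2 hr), mul_zero, inv_inv, smul_eq_mul, ← mul_assoc, ← rpow_add_one hr.ne']
  ring_nf

theorem setIntegral_mul_manevKernel_le {α k : ℝ} (hα₀ : 0 ≤ α) (hα₁ : α < 1)
    (hk : k * (1 - α) = 3) {ρ : ℝ → ℝ} (hρ₀ : ∀ s, 0 ≤ ρ s)
    (h₁ : IntegrableOn (fun s => ρ s * s ^ 2) (Ioi 0))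
    (h₃₂ : IntegrableOn (fun s => ρ s ^ ((3:ℝ)/2) * s ^ 2) (Ioi 0)) {r : ℝ} (hr : 0 < r) :
    ∫ s in Ioi 0, ρ s * manevKernel r s * s ^ 2 ≤
      (∫ s in Ioi 0, ρ s * s ^ 2) ^ α *
        ((∫ s in Ioi 0, ρ s ^ ((3:ℝ)/2) * s ^ 2) ^ ((2:ℝ)/3)) ^ (1 - α) *
        ((∫ u in Ioi 0, manevKernel 1 u ^ k * u ^ 2) ^ (1 / k) * r ^ (-1 - α)) := by
  have hk₀ : 0 < k := by nlinarith
  set K := ∫ u in Ioi 0, manevKernel 1 u ^ k * u ^ 2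
  set N₂ := ∫ s in Ioi 0, ρ s ^ ((3:ℝ)/2) * s ^ 2
  have hK : 0 ≤ K := setIntegral_nonneg measurableSet_Ioi fun u hu => by
    positivity [manevKernel_nonneg zero_le_one (le_of_lt hu)]
  have hN₂ : 0 ≤ N₂ := setIntegral_nonneg measurableSet_Ioi fun s _ => by positivity [hρ₀ s]
  have hscale : (r ^ (3 - 2 * k) * K) ^ (1 / k) = K ^ (1 / k) * r ^ (-1 - α) := by
    rw [mul_rpow (by positivity) hK, ← rpow_mul hr.le, mul_comm]
    congr 2
    field_simp
    linarith
  have hN₂' : N₂ ^ ((1 - α) / (3 / 2)) = (N₂ ^ ((2:ℝ)/3)) ^ (1 - α) := by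
    rw [← rpow_mul hN₂]; ring_nf
  rw [← hscale, ← hN₂', ← setIntegral_manevKernel_rpow_mul_sq hr]
  exact integral_mul_mul_le_interpolation (ae_of_all _ hρ₀)
    (ae_restrict_of_forall_mem measurableSet_Ioi fun s hs => manevKernel_nonneg hr.le (le_of_lt hs))
    (ae_of_all _ sq_nonneg) hα₀ hα₁.le (by norm_num) hk₀ (by field_simp; linarith) h₁ h₃₂
    (integrableOn_manevKernel_rpow_mul_sq hr (by nlinarith))

/-- Decay estimate for radial Manev potentials: for each `0 < α < 1` there exists
`C_α > 0` independent of the radial density `ρ ∈ L¹ ∩ L^{3/2}((0,∞), s² ds)` such that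
the potential `φ(r) = -(1/π) ∫₀^∞ ρ(s) (1/(rs)) log|(r+s)/(r-s)| s² ds` satisfies
`|φ(r)| ≤ C_α r^{-1-α} (‖ρ‖_{L¹(s²ds)} + ‖ρ‖_{L^{3/2}(s²ds)})` for all `r > 0`. -/
theorem radial_manev_decay (α : ℝ) (hα0 : 0 < α) (hα1 : α < 1) :
    ∃ C > 0, ∀ ρ : ℝ → ℝ, Measurable ρ → (∀ s, 0 ≤ ρ s) →
      IntegrableOn (fun s => ρ s * s ^ 2) (Set.Ioi 0) →
      IntegrableOn (fun s => ρ s ^ ((3:ℝ)/2) * s ^ 2) (Set.Ioi 0) →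
      ∀ r : ℝ, 0 < r →
        |(-(1 / π)) * ∫ s in Set.Ioi (0:ℝ),
            ρ s * (1 / (r * s) * Real.log |(r + s) / (r - s)|) * s ^ 2|
          ≤ C * r ^ (-1 - α) *
            ((∫ s in Set.Ioi (0:ℝ), ρ s * s ^ 2)
              + (∫ s in Set.Ioi (0:ℝ), ρ s ^ ((3:ℝ)/2) * s ^ 2) ^ ((2:ℝ)/3)) := by
  obtain ⟨k, hk⟩ : ∃ k, k * (1 - α) = 3 := ⟨3 / (1 - α), div_mul_cancel₀ _ (by linarith)⟩
  set K := ∫ u in Ioi 0, manevKernel 1 u ^ k * u ^ 2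
  have hK : 0 ≤ K := setIntegral_nonneg measurableSet_Ioi fun u hu => by
    positivity [manevKernel_nonneg zero_le_one (le_of_lt hu)]
  refine ⟨K ^ (1 / k) + 1, by positivity, fun ρ _ hρ₀ h₁ h₃₂ r hr => ?_⟩
  set N₁ := ∫ s in Ioi 0, ρ s * s ^ 2
  set N₂ := ∫ s in Ioi 0, ρ s ^ ((3:ℝ)/2) * s ^ 2
  set I := ∫ s in Ioi 0, ρ s * manevKernel r s * s ^ 2
  have hN₁ : 0 ≤ N₁ := setIntegral_nonneg measurableSet_Ioi fun s _ => by positivity [hρ₀ s]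
  have hN₂ : 0 ≤ N₂ := setIntegral_nonneg measurableSet_Ioi fun s _ => by positivity [hρ₀ s]
  have hI : 0 ≤ I := setIntegral_nonneg measurableSet_Ioi fun s hs => by
    positivity [hρ₀ s, manevKernel_nonneg hr.le (le_of_lt hs)]
  have hπ : |(-(1 / π)) * I| ≤ I := by
    rw [abs_mul, abs_neg, abs_of_pos (by positivity), abs_of_nonneg hI]
    exact mul_le_of_le_one_left hI ((div_le_one pi_pos).2 (by linarith [pi_gt_three]))
  calc |(-(1 / π)) * I| ≤ I := hπ
    _ ≤ N₁ ^ α * (N₂ ^ ((2:ℝ)/3)) ^ (1 - α) * (K ^ (1 / k) * r ^ (-1 - α)) :=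
      setIntegral_mul_manevKernel_le hα0.le hα1 hk hρ₀ h₁ h₃₂ hr
    _ ≤ (N₁ + N₂ ^ ((2:ℝ)/3)) * ((K ^ (1 / k) + 1) * r ^ (-1 - α)) := by
      gcongr
      · exact rpow_mul_rpow_one_sub_le_add hN₁ (by positivity) hα0.le hα1.le
      · linarith
    _ = _ := by ring
end
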